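/- Let B be a finite simple graph equipped with an adapted complex structure J. The following are equivalent: (i) every edge of B is distinguished; (ii) B is a disjoint union of copies of A₁, A₂ and A₃, each copy invariant under J (up to sign) with J acting on each copy as the standard adapted complex structure (on A₁ with vertices v₁, v₂: Jv₁ = v₂; on A₂ with vertices v₁, v₂, v₃ and edge e₁₂ joining v₁, v₂: Jv₁ = v₂ and Jv₃ = e₁₂; on A₃ with vertices v₁, v₂, v₃, v₄ and edges e₁₂, e₃₄: Jv₁ = v₂, Jv₃ = v₄ and Je₁₂ = e₃₄); (iii) J is abelian, i.e., [Jx, Jy] = [x, y] for all x, y ∈ 𝔫_B. -/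

import Mathlib

/-!  Framework: the 2-step nilpotent Lie algebra `𝔫_G` associated to a finite simple
graph `G` (Dani–Mainkar construction), and adapted complex structures on it. -/

open scoped BigOperators

namespace GraphLie

variable {V : Type*} [Fintype V] [LinearOrder V]

/-- The underlying real vector space of the Lie algebra `𝔫_G` associated to a graph `G`:
real-valued functions on its basis `V ⊕ G.edgeSet` (vertices and edges). -/
abbrev Niln (G : SimpleGraph V) : Type _ := (V ⊕ G.edgeSet) → ℝ

variable (G : SimpleGraph V) [DecidableRel G.Adj]

/-- The basis vector of `𝔫_G` corresponding to the vertex `v`. -/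
noncomputable def vtx (v : V) : Niln G := Pi.single (Sum.inl v) 1

/-- The basis vector of `𝔫_G` corresponding to the edge `e`. -/
noncomputable def edg (e : G.edgeSet) : Niln G := Pi.single (Sum.inr e) 1

/-- The basis vector of `𝔫_G` corresponding to a vertex or an edge. -/
noncomputable def basisVec (b : V ⊕ G.edgeSet) : Niln G := Pi.single b 1

/-- The bracket of two vertex generators: for adjacent vertices `i < j` (with respect to
the chosen labeling of the vertices) `[v_i, v_j] = e_{i,j}` and `[v_j, v_i] = -e_{i,j}`;
non-adjacent vertices commute. -/
noncomputable def bracketVtx (i j : V) : Niln G :=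
  if h : G.Adj i j then
    (if i < j then edg G ⟨s(i, j), G.mem_edgeSet.mpr h⟩
     else - edg G ⟨s(i, j), G.mem_edgeSet.mpr h⟩)
  else 0

/-- The Lie bracket of `𝔫_G`, extended bilinearly from the generators; all the
edge generators are central. -/
noncomputable def bracket (x y : Niln G) : Niln G :=
  ∑ i : V, ∑ j : V, (x (Sum.inl i) * y (Sum.inl j)) • bracketVtx G i j

/-- An adapted complex structure on the graph `G`: a linear endomorphism `J` of `𝔫_G`
with `J ∘ J = -id`, whose Nijenhuis tensor vanishes, and which sends each basis vector
(vertex or edge) to plus or minus a basis vector. -/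
structure AdaptedCS : Type _ where
  J : Niln G →ₗ[ℝ] Niln G
  j_squared : ∀ x, J (J x) = -x
  integrable : ∀ x y,
    bracket G x y + J (bracket G (J x) y + bracket G x (J y)) - bracket G (J x) (J y) = 0
  adapted : ∀ b : V ⊕ G.edgeSet,
    (∃ b', J (basisVec G b) = basisVec G b') ∨ (∃ b', J (basisVec G b) = - basisVec G b')

variable {G}

/-- An edge of `G` joining vertices `v` and `w` is distinguished if `Jv = w` or `Jw = v`. -/
def AdaptedCS.Distinguished (Jc : AdaptedCS G) (e : G.edgeSet) : Prop :=
  ∃ v w : V, (e : Sym2 V) = s(v, w) ∧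
    (Jc.J (vtx G v) = vtx G w ∨ Jc.J (vtx G w) = vtx G v)

end GraphLie

namespace GraphLie
set_option linter.unusedSectionVars false

variable {V : Type*} [Fintype V] [LinearOrder V]
variable {G : SimpleGraph V} [DecidableRel G.Adj]

lemma basisVec_inl (v : V) : basisVec G (Sum.inl v) = vtx G v := rfl
lemma basisVec_inr (e : G.edgeSet) : basisVec G (Sum.inr e) = edg G e := rfl

lemma basisVec_inj {b b' : V ⊕ G.edgeSet} (h : basisVec G b = basisVec G b') : b = b' := by
  by_contra hne
  have := congrFun h b
  simp [basisVec, Pi.single_apply, hne] at this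

lemma basisVec_ne_neg (b b' : V ⊕ G.edgeSet) : basisVec G b ≠ - basisVec G b' := by
  intro h
  have := congrFun h b
  rcases eq_or_ne b b' with rfl | hne
  · simp [basisVec, Pi.single_apply] at this
    linarith
  · simp [basisVec, Pi.single_apply, hne] at this

lemma basisVec_ne_zero (b : V ⊕ G.edgeSet) : basisVec G b ≠ 0 := by
  intro h
  have := congrFun h b
  simp [basisVec, Pi.single_apply] at this

end GraphLie

namespace GraphLie
set_option linter.unusedSectionVars false

variable {V : Type*} [Fintype V] [LinearOrder V]
variable {G : SimpleGraph V} [DecidableRel G.Adj]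

lemma sg_degree_le_one_iff {v : V} :
    G.degree v ≤ 1 ↔ ∀ a b, G.Adj v a → G.Adj v b → a = b := by
  rw [← SimpleGraph.card_neighborFinset_eq_degree, Finset.card_le_one]
  simp only [SimpleGraph.mem_neighborFinset]
  exact ⟨fun h a b ha hb => h a ha b hb, fun h a ha b hb => h a b ha hb⟩

lemma sg_degree_eq_zero_iff {v : V} : G.degree v = 0 ↔ ∀ w, ¬ G.Adj v w := by
  rw [← SimpleGraph.card_neighborFinset_eq_degree, Finset.card_eq_zero,
    Finset.eq_empty_iff_forall_notMem]
  simp [SimpleGraph.mem_neighborFinset]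

lemma bracket_vtx_vtx (i j : V) : bracket G (vtx G i) (vtx G j) = bracketVtx G i j := by
  simp [bracket, vtx, Pi.single_apply]

lemma bracket_zero_left_of (x y : Niln G) (h : ∀ i, x (Sum.inl i) = 0) :
    bracket G x y = 0 := by
  simp [bracket, h]

lemma bracket_zero_right_of (x y : Niln G) (h : ∀ i, y (Sum.inl i) = 0) :
    bracket G x y = 0 := by
  simp [bracket, h]

lemma edg_apply_inl (e : G.edgeSet) (i : V) : edg G e (Sum.inl i) = 0 := by
  simp [edg, Pi.single_apply]

lemma bracket_edg_left (e : G.edgeSet) (y : Niln G) : bracket G (edg G e) y = 0 :=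
  bracket_zero_left_of _ _ (edg_apply_inl e)

lemma bracket_edg_right (e : G.edgeSet) (x : Niln G) : bracket G x (edg G e) = 0 :=
  bracket_zero_right_of _ _ (edg_apply_inl e)

lemma bracketVtx_self (i : V) : bracketVtx G i i = 0 := by
  simp [bracketVtx]

lemma edg_congr {e f : G.edgeSet} (h : (e : Sym2 V) = (f : Sym2 V)) : edg G e = edg G f := by
  cases Subtype.ext h; rfl

lemma bracketVtx_antisymm (i j : V) : bracketVtx G j i = - bracketVtx G i j := by
  unfold bracketVtx
  by_cases h : G.Adj i j
  · have h' : G.Adj j i := h.symm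
    have hs : edg G ⟨s(j,i), G.mem_edgeSet.mpr h'⟩ = edg G ⟨s(i,j), G.mem_edgeSet.mpr h⟩ :=
      edg_congr (Sym2.eq_swap)
    rcases lt_or_gt_of_ne h.ne with hlt | hgt
    · rw [dif_pos h', dif_pos h, if_pos hlt, if_neg (not_lt.mpr hlt.le), hs]
    · rw [dif_pos h', dif_pos h, if_pos hgt, if_neg (not_lt.mpr hgt.le), hs, neg_neg]
  · rw [dif_neg h, dif_neg (fun h' => h h'.symm), neg_zero]

lemma bracketVtx_apply_inl (i j v : V) : bracketVtx G i j (Sum.inl v) = 0 := by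
  unfold bracketVtx
  split_ifs <;> simp [edg, Pi.single_apply]

lemma bracketVtx_apply_inr_ne (i j : V) {e : G.edgeSet} (h : (e : Sym2 V) ≠ s(i,j)) :
    bracketVtx G i j (Sum.inr e) = 0 := by
  unfold bracketVtx
  split_ifs <;> simp_all [edg, Pi.single_apply, Subtype.ext_iff]

lemma bracketVtx_apply_inr_self (i j : V) (hadj : G.Adj i j) {e : G.edgeSet}
    (he : (e : Sym2 V) = s(i,j)) :
    bracketVtx G i j (Sum.inr e) = if i < j then 1 else -1 := by
  unfold bracketVtx
  rw [dif_pos hadj]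
  split_ifs <;> simp [edg, Pi.single_apply, Subtype.ext_iff, he]

lemma bracketVtx_eq_zero_of_not_adj {i j : V} (h : ¬ G.Adj i j) : bracketVtx G i j = 0 := by
  simp [bracketVtx, h]

lemma bracketVtx_ne_zero {i j : V} (h : G.Adj i j) : bracketVtx G i j ≠ 0 := by
  intro hz
  have := congrFun hz (Sum.inr ⟨s(i,j), G.mem_edgeSet.mpr h⟩)
  rw [bracketVtx_apply_inr_self i j h rfl] at this
  split_ifs at this <;> norm_num at this

end GraphLie

namespace GraphLie
set_option linter.unusedSectionVars false

variable {V : Type*} [Fintype V] [LinearOrder V]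
variable {G : SimpleGraph V} [DecidableRel G.Adj]

noncomputable def bracketHom (G : SimpleGraph V) [DecidableRel G.Adj] :
    Niln G →ₗ[ℝ] Niln G →ₗ[ℝ] Niln G :=
  LinearMap.mk₂ ℝ (bracket G)
    (fun x x' y => by simp [bracket, add_mul, add_smul, Finset.sum_add_distrib])
    (fun a x y => by simp [bracket, Finset.smul_sum, smul_smul, mul_assoc])
    (fun x y y' => by simp [bracket, mul_add, add_smul, Finset.sum_add_distrib])
    (fun a x y => by simp [bracket, Finset.smul_sum, smul_smul, mul_assoc, mul_left_comm])

lemma bracketHom_apply (x y : Niln G) : bracketHom G x y = bracket G x y := rfl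

lemma bracket_smul_smul (a b : ℝ) (x y : Niln G) :
    bracket G (a • x) (b • y) = (a * b) • bracket G x y := by
  show bracketHom G (a • x) (b • y) = (a * b) • bracketHom G x y
  rw [map_smul, map_smul, LinearMap.smul_apply, smul_smul, mul_comm b a]

lemma sum_basis (x : Niln G) : x = ∑ b, x b • basisVec G b := by
  ext c
  rw [Finset.sum_apply]
  simp [basisVec, Pi.single_apply]

lemma bracket_map_congr {T S : Niln G →ₗ[ℝ] Niln G}
    (h : ∀ b c, bracket G (T (basisVec G b)) (T (basisVec G c)) =
      bracket G (S (basisVec G b)) (S (basisVec G c))) (x y : Niln G) :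
    bracket G (T x) (T y) = bracket G (S x) (S y) := by
  rw [← bracketHom_apply, ← bracketHom_apply]
  conv_lhs => rw [sum_basis x, sum_basis y]
  conv_rhs => rw [sum_basis x, sum_basis y]
  rw [map_sum, map_sum, map_sum, map_sum]
  simp only [map_smul, map_sum, LinearMap.sum_apply, LinearMap.smul_apply,
    bracketHom_apply, h]

lemma AdaptedCS.exists_sign (Jc : AdaptedCS G) (b : V ⊕ G.edgeSet) :
    ∃ (ε : ℝ) (b' : V ⊕ G.edgeSet), (ε = 1 ∨ ε = -1) ∧
      Jc.J (basisVec G b) = ε • basisVec G b' := by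
  rcases Jc.adapted b with ⟨b', hb'⟩ | ⟨b', hb'⟩
  · exact ⟨1, b', Or.inl rfl, by simpa using hb'⟩
  · exact ⟨-1, b', Or.inr rfl, by simpa using hb'⟩

/-- If `J v = w` for vertex basis vectors then `J w = -v`. -/
lemma AdaptedCS.j_flip (Jc : AdaptedCS G) {x y : Niln G} (h : Jc.J x = y) :
    Jc.J y = -x := by
  rw [← h, Jc.j_squared]

end GraphLie

namespace GraphLie
set_option linter.unusedSectionVars false

variable {V : Type*} [Fintype V] [LinearOrder V]
variable {G : SimpleGraph V} [DecidableRel G.Adj]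

lemma bracket_neg_left (x y : Niln G) : bracket G (-x) y = - bracket G x y := by
  show bracketHom G (-x) y = - bracketHom G x y
  rw [map_neg, LinearMap.neg_apply]

lemma bracket_neg_right (x y : Niln G) : bracket G x (-y) = - bracket G x y := by
  show bracketHom G x (-y) = - bracketHom G x y
  rw [map_neg]

lemma bracket_isolated_left {v : V} (h : ∀ j, ¬ G.Adj v j) (y : Niln G) :
    bracket G (vtx G v) y = 0 := by
  unfold bracket
  refine Finset.sum_eq_zero fun i _ => Finset.sum_eq_zero fun j _ => ?_
  rcases eq_or_ne i v with rfl | hne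
  · rw [bracketVtx_eq_zero_of_not_adj (h j), smul_zero]
  · simp [vtx, Pi.single_apply, hne]

lemma bracket_isolated_right {v : V} (h : ∀ j, ¬ G.Adj v j) (x : Niln G) :
    bracket G x (vtx G v) = 0 := by
  unfold bracket
  refine Finset.sum_eq_zero fun i _ => Finset.sum_eq_zero fun j _ => ?_
  rcases eq_or_ne j v with rfl | hne
  · rw [bracketVtx_eq_zero_of_not_adj (fun hadj => h i hadj.symm), smul_zero]
  · simp [vtx, Pi.single_apply, hne]

lemma basisVec_apply_ne {d x : V ⊕ G.edgeSet} (h : x ≠ d) : basisVec G d x = 0 := by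
  simp [basisVec, Pi.single_apply, h]

lemma vtx_ne_edg (v : V) (e : G.edgeSet) : vtx G v ≠ edg G e := by
  intro h
  exact Sum.inl_ne_inr (basisVec_inj (G := G) (b := Sum.inl v) (b' := Sum.inr e) h)

lemma vtx_ne_neg_edg (v : V) (e : G.edgeSet) : vtx G v ≠ - edg G e :=
  basisVec_ne_neg (Sum.inl v) (Sum.inr e)

lemma edg_ne_neg_vtx (e : G.edgeSet) (v : V) : edg G e ≠ - vtx G v :=
  basisVec_ne_neg (Sum.inr e) (Sum.inl v)

lemma vtx_inj {v w : V} (h : vtx G v = vtx G w) : v = w := by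
  cases basisVec_inj (G := G) (b := Sum.inl v) (b' := Sum.inl w) h; rfl

lemma vtx_ne_neg (v w : V) : vtx G v ≠ - vtx G w :=
  basisVec_ne_neg (Sum.inl v) (Sum.inl w)

lemma edge_repr (e : G.edgeSet) : ∃ u w, (e : Sym2 V) = s(u, w) ∧ G.Adj u w := by
  obtain ⟨s, hs⟩ := e
  induction s using Sym2.ind with
  | _ u w => exact ⟨u, w, rfl, G.mem_edgeSet.mp hs⟩

lemma adj_of_repr {e : G.edgeSet} {u w : V} (h : (e : Sym2 V) = s(u, w)) : G.Adj u w :=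
  G.mem_edgeSet.mp (h ▸ e.2)

lemma AdaptedCS.vtx_cases (Jc : AdaptedCS G) (v : V) :
    (∃ w, Jc.J (vtx G v) = vtx G w ∨ Jc.J (vtx G v) = - vtx G w) ∨
    (∃ e, Jc.J (vtx G v) = edg G e ∨ Jc.J (vtx G v) = - edg G e) := by
  rcases Jc.adapted (Sum.inl v) with ⟨b', h⟩ | ⟨b', h⟩ <;> rcases b' with w | e
  · exact Or.inl ⟨w, Or.inl h⟩
  · exact Or.inr ⟨e, Or.inl h⟩
  · exact Or.inl ⟨w, Or.inr h⟩
  · exact Or.inr ⟨e, Or.inr h⟩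

lemma AdaptedCS.edg_cases (Jc : AdaptedCS G) (e : G.edgeSet) :
    (∃ w, Jc.J (edg G e) = vtx G w ∨ Jc.J (edg G e) = - vtx G w) ∨
    (∃ f, Jc.J (edg G e) = edg G f ∨ Jc.J (edg G e) = - edg G f) := by
  rcases Jc.adapted (Sum.inr e) with ⟨b', h⟩ | ⟨b', h⟩ <;> rcases b' with w | f
  · exact Or.inl ⟨w, Or.inl h⟩
  · exact Or.inr ⟨f, Or.inl h⟩
  · exact Or.inl ⟨w, Or.inr h⟩
  · exact Or.inr ⟨f, Or.inr h⟩

/-- From `J x = -y` conclude `J y = x` (for the linear `J` with `J² = -1`). -/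
lemma AdaptedCS.j_flip_neg (Jc : AdaptedCS G) {x y : Niln G} (h : Jc.J x = -y) :
    Jc.J y = x := by
  have := Jc.j_squared x
  rw [h, map_neg, neg_eq_iff_eq_neg, neg_neg] at this
  exact this

lemma dist_endpoints {Jc : AdaptedCS G} {e : G.edgeSet} (hd : Jc.Distinguished e)
    {u w : V} (he : (e : Sym2 V) = s(u, w)) :
    Jc.J (vtx G u) = vtx G w ∨ Jc.J (vtx G w) = vtx G u := by
  obtain ⟨p, q, hpq, h⟩ := hd
  rw [he] at hpq
  rcases Sym2.eq_iff.mp hpq with ⟨rfl, rfl⟩ | ⟨rfl, rfl⟩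
  · exact h
  · exact h.symm

lemma AdaptedCS.j_bracketVtx (Jc : AdaptedCS G) (a b : V) :
    ∃ (c : ℝ) (d : V ⊕ G.edgeSet), Jc.J (bracketVtx G a b) = c • basisVec G d := by
  unfold bracketVtx
  split_ifs with h h'
  · obtain ⟨ε, d, _, hd⟩ := Jc.exists_sign (Sum.inr ⟨s(a, b), G.mem_edgeSet.mpr h⟩)
    exact ⟨ε, d, by rw [← basisVec_inr]; exact hd⟩
  · obtain ⟨ε, d, _, hd⟩ := Jc.exists_sign (Sum.inr ⟨s(a, b), G.mem_edgeSet.mpr h⟩)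
    refine ⟨-ε, d, ?_⟩
    rw [map_neg, ← basisVec_inr, hd, neg_smul]
  · exact ⟨0, Sum.inl a, by simp⟩

end GraphLie

namespace GraphLie
set_option linter.unusedSectionVars false
variable {V : Type*} [Fintype V] [LinearOrder V]
variable {G : SimpleGraph V} [DecidableRel G.Adj]
lemma edg_ne_neg_edg (e f : G.edgeSet) : edg G e ≠ - edg G f :=
  basisVec_ne_neg (Sum.inr e) (Sum.inr f)
end GraphLie

namespace GraphLie
set_option linter.unusedSectionVars false

variable {V : Type*} [Fintype V] [LinearOrder V]
variable {G : SimpleGraph V} [DecidableRel G.Adj]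

lemma deg_le_one_of_dist (Jc : AdaptedCS G) (hdist : ∀ e : G.edgeSet, Jc.Distinguished e)
    (v : V) : G.degree v ≤ 1 := by
  rw [sg_degree_le_one_iff]
  intro a b ha hb
  by_contra hab
  have hd1 := dist_endpoints (hdist ⟨s(v, a), G.mem_edgeSet.mpr ha⟩) (u := v) (w := a) rfl
  have hd2 := dist_endpoints (hdist ⟨s(v, b), G.mem_edgeSet.mpr hb⟩) (u := v) (w := b) rfl
  rcases hd1 with h1 | h1 <;> rcases hd2 with h2 | h2
  · exact hab (vtx_inj (h1.symm.trans h2))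
  · have hq := Jc.j_squared (vtx G b)
    rw [h2] at hq
    rw [h1] at hq
    exact vtx_ne_neg a b hq
  · -- integrability case : J (vtx a) = vtx v, J (vtx v) = vtx b
    have hint := Jc.integrable (vtx G a) (vtx G v)
    rw [h1, h2] at hint
    simp only [bracket_vtx_vtx, bracketVtx_self, zero_add] at hint
    obtain ⟨c, d, hcd⟩ := Jc.j_bracketVtx a b
    rw [hcd] at hint
    have hav : G.Adj a v := ha.symm
    have hvb : G.Adj v b := hb
    have hne_s : s(a, v) ≠ s(v, b) := by
      intro hss
      rcases Sym2.eq_iff.mp hss with ⟨h1', h2'⟩ | ⟨h1', h2'⟩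
      · exact hav.ne h1'
      · exact hab h1'
    have hval1 := congrFun hint (Sum.inr ⟨s(a, v), G.mem_edgeSet.mpr hav⟩)
    have hval2 := congrFun hint (Sum.inr ⟨s(v, b), G.mem_edgeSet.mpr hvb⟩)
    simp only [Pi.add_apply, Pi.sub_apply, Pi.smul_apply, Pi.zero_apply, smul_eq_mul] at hval1 hval2
    rw [bracketVtx_apply_inr_self a v hav rfl,
      bracketVtx_apply_inr_ne v b (fun h => hne_s h)] at hval1
    rw [bracketVtx_apply_inr_ne a v (fun h => hne_s h.symm),
      bracketVtx_apply_inr_self v b hvb rfl] at hval2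
    have hd1' : Sum.inr (⟨s(a, v), G.mem_edgeSet.mpr hav⟩ : G.edgeSet) = d := by
      by_contra hx
      rw [basisVec_apply_ne hx] at hval1
      split_ifs at hval1 <;> norm_num at hval1
    have hd2' : Sum.inr (⟨s(v, b), G.mem_edgeSet.mpr hvb⟩ : G.edgeSet) = d := by
      by_contra hx
      rw [basisVec_apply_ne hx] at hval2
      split_ifs at hval2 <;> norm_num at hval2
    rw [← hd2'] at hd1'
    have : s(a, v) = s(v, b) := congrArg Subtype.val (Sum.inr.inj hd1')
    exact hne_s this
  · have ha' := Jc.j_squared (vtx G a)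
    have hb' := Jc.j_squared (vtx G b)
    rw [h1] at ha'
    rw [h2] at hb'
    exact hab (vtx_inj (neg_injective (ha'.symm.trans hb')))

end GraphLie

namespace GraphLie
set_option linter.unusedSectionVars false

variable {V : Type*} [Fintype V] [LinearOrder V]
variable {G : SimpleGraph V} [DecidableRel G.Adj]

lemma swap_clause_of_dist (Jc : AdaptedCS G) (hdist : ∀ e : G.edgeSet, Jc.Distinguished e)
    (e : G.edgeSet) (u w : V) (he : (e : Sym2 V) = s(u, w)) :
    Jc.J (vtx G u) = vtx G w ∨ Jc.J (vtx G u) = - vtx G w := by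
  rcases dist_endpoints (hdist e) he with h | h
  · exact Or.inl h
  · right
    have := Jc.j_squared (vtx G w)
    rw [h] at this
    exact this

lemma iso_clause_of_dist (Jc : AdaptedCS G) (hdist : ∀ e : G.edgeSet, Jc.Distinguished e)
    (v : V) (hdeg : G.degree v = 0) :
    (∃ w, w ≠ v ∧ G.degree w = 0 ∧
      (Jc.J (vtx G v) = vtx G w ∨ Jc.J (vtx G v) = - vtx G w)) ∨
    (∃ e : G.edgeSet, Jc.J (vtx G v) = edg G e ∨ Jc.J (vtx G v) = - edg G e) := by
  have hnadj : ∀ x, ¬ G.Adj v x := sg_degree_eq_zero_iff.mp hdeg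
  rcases Jc.vtx_cases v with ⟨w, hw⟩ | ⟨e, he⟩
  · left
    -- compute J (vtx w)
    have hjw : Jc.J (vtx G w) = - vtx G v ∨ Jc.J (vtx G w) = vtx G v := by
      rcases hw with h | h
      · have := Jc.j_squared (vtx G v); rw [h] at this; exact Or.inl this
      · exact Or.inr (Jc.j_flip_neg h)
    have hwv : w ≠ v := by
      rintro rfl
      rcases hw with h | h
      · have h2 := Jc.j_squared (vtx G w)
        rw [h, h] at h2
        exact vtx_ne_neg w w h2
      · exact vtx_ne_neg w w ((Jc.j_flip_neg h).symm.trans h)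
    refine ⟨w, hwv, ?_, hw⟩
    rw [sg_degree_eq_zero_iff]
    intro u hadj
    rcases dist_endpoints (hdist ⟨s(w, u), G.mem_edgeSet.mpr hadj⟩) rfl with h | h
    · rcases hjw with h' | h'
      · exact vtx_ne_neg u v (h.symm.trans h')
      · have huv : u = v := vtx_inj (h.symm.trans h')
        exact hnadj w (huv ▸ hadj).symm
    · have hjw2 := Jc.j_squared (vtx G u)
      rw [h] at hjw2
      rcases hjw with h' | h'
      · have huv : u = v := vtx_inj (neg_injective (hjw2.symm.trans h'))
        exact hnadj w (huv ▸ hadj).symm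
      · exact vtx_ne_neg v u (h'.symm.trans hjw2)
  · exact Or.inr ⟨e, he⟩

lemma edge_clause_of_dist (Jc : AdaptedCS G) (hdist : ∀ e : G.edgeSet, Jc.Distinguished e)
    (hdeg1 : ∀ x, G.degree x ≤ 1) (e : G.edgeSet) :
    (∃ v, G.degree v = 0 ∧
      (Jc.J (edg G e) = vtx G v ∨ Jc.J (edg G e) = - vtx G v)) ∨
    (∃ f : G.edgeSet, (∀ x : V, x ∈ (e : Sym2 V) → x ∉ (f : Sym2 V)) ∧
      (Jc.J (edg G e) = edg G f ∨ Jc.J (edg G e) = - edg G f)) := by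
  rcases Jc.edg_cases e with ⟨w, hw⟩ | ⟨f, hf⟩
  · left
    refine ⟨w, ?_, hw⟩
    rw [sg_degree_eq_zero_iff]
    intro u hadj
    -- J (vtx w) = ± edg e
    have hjw : Jc.J (vtx G w) = - edg G e ∨ Jc.J (vtx G w) = edg G e := by
      rcases hw with h | h
      · have := Jc.j_squared (edg G e); rw [h] at this; exact Or.inl this
      · exact Or.inr (Jc.j_flip_neg h)
    rcases dist_endpoints (hdist ⟨s(w, u), G.mem_edgeSet.mpr hadj⟩) rfl with h | h
    · rcases hjw with h' | h'
      · exact vtx_ne_neg_edg u e (h.symm.trans h')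
      · exact vtx_ne_edg u e (h.symm.trans h')
    · have hj2 := Jc.j_squared (vtx G u)
      rw [h] at hj2
      rcases hjw with h' | h'
      · have : vtx G u = edg G e := by
          have := h'.symm.trans hj2
          rwa [neg_inj, eq_comm] at this
        exact vtx_ne_edg u e this
      · have : edg G e = - vtx G u := h'.symm.trans hj2
        exact edg_ne_neg_vtx e u this
  · right
    refine ⟨f, ?_, hf⟩
    intro x hxe hxf
    -- f ≠ e
    have hfe : f ≠ e := by
      rintro rfl
      rcases hf with h | h
      · have h2 := Jc.j_squared (edg G f)
        rw [h, h] at h2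
        exact edg_ne_neg_edg f f h2
      · exact edg_ne_neg_edg f f ((Jc.j_flip_neg h).symm.trans h)
    obtain ⟨y, hy⟩ := Sym2.mem_iff_exists.mp hxe
    obtain ⟨z, hz⟩ := Sym2.mem_iff_exists.mp hxf
    have hady : G.Adj x y := adj_of_repr hy
    have hadz : G.Adj x z := adj_of_repr hz
    have : y = z := sg_degree_le_one_iff.mp (hdeg1 x) y z hady hadz
    apply hfe
    apply Subtype.ext
    rw [hz, hy, this]

end GraphLie

namespace GraphLie
set_option linter.unusedSectionVars false

variable {V : Type*} [Fintype V] [LinearOrder V]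
variable {G : SimpleGraph V} [DecidableRel G.Adj]

lemma two_to_ab (Jc : AdaptedCS G)
    (h1 : ∀ v, G.degree v ≤ 1)
    (h2 : ∀ v, G.degree v = 0 →
      (∃ w, w ≠ v ∧ G.degree w = 0 ∧
        (Jc.J (vtx G v) = vtx G w ∨ Jc.J (vtx G v) = - vtx G w)) ∨
      (∃ e : G.edgeSet, Jc.J (vtx G v) = edg G e ∨ Jc.J (vtx G v) = - edg G e))
    (h3 : ∀ e : G.edgeSet, ∀ u w : V, (e : Sym2 V) = s(u, w) →
      (Jc.J (vtx G u) = vtx G w ∨ Jc.J (vtx G u) = - vtx G w))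
    (h4 : ∀ e : G.edgeSet,
      (∃ v, G.degree v = 0 ∧
        (Jc.J (edg G e) = vtx G v ∨ Jc.J (edg G e) = - vtx G v)) ∨
      (∃ f : G.edgeSet, (∀ x : V, x ∈ (e : Sym2 V) → x ∉ (f : Sym2 V)) ∧
        (Jc.J (edg G e) = edg G f ∨ Jc.J (edg G e) = - edg G f)))
    (x y : Niln G) : bracket G (Jc.J x) (Jc.J y) = bracket G x y := by
  have lemA_left : ∀ v, G.degree v = 0 → ∀ z, bracket G (Jc.J (vtx G v)) z = 0 := by
    intro v hv z
    rcases h2 v hv with ⟨w, _, hw0, hjw | hjw⟩ | ⟨e, hje | hje⟩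
    · rw [hjw]; exact bracket_isolated_left (sg_degree_eq_zero_iff.mp hw0) z
    · rw [hjw, bracket_neg_left,
        bracket_isolated_left (sg_degree_eq_zero_iff.mp hw0) z, neg_zero]
    · rw [hje]; exact bracket_edg_left e z
    · rw [hje, bracket_neg_left, bracket_edg_left, neg_zero]
  have lemA_right : ∀ v, G.degree v = 0 → ∀ z, bracket G z (Jc.J (vtx G v)) = 0 := by
    intro v hv z
    rcases h2 v hv with ⟨w, _, hw0, hjw | hjw⟩ | ⟨e, hje | hje⟩
    · rw [hjw]; exact bracket_isolated_right (sg_degree_eq_zero_iff.mp hw0) z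
    · rw [hjw, bracket_neg_right,
        bracket_isolated_right (sg_degree_eq_zero_iff.mp hw0) z, neg_zero]
    · rw [hje]; exact bracket_edg_right e z
    · rw [hje, bracket_neg_right, bracket_edg_right, neg_zero]
  have lemB_left : ∀ e : G.edgeSet, ∀ z, bracket G (Jc.J (edg G e)) z = 0 := by
    intro e z
    rcases h4 e with ⟨v, hv0, hjv | hjv⟩ | ⟨f, _, hjf | hjf⟩
    · rw [hjv]; exact bracket_isolated_left (sg_degree_eq_zero_iff.mp hv0) z
    · rw [hjv, bracket_neg_left,
        bracket_isolated_left (sg_degree_eq_zero_iff.mp hv0) z, neg_zero]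
    · rw [hjf]; exact bracket_edg_left f z
    · rw [hjf, bracket_neg_left, bracket_edg_left, neg_zero]
  have lemB_right : ∀ e : G.edgeSet, ∀ z, bracket G z (Jc.J (edg G e)) = 0 := by
    intro e z
    rcases h4 e with ⟨v, hv0, hjv | hjv⟩ | ⟨f, _, hjf | hjf⟩
    · rw [hjv]; exact bracket_isolated_right (sg_degree_eq_zero_iff.mp hv0) z
    · rw [hjv, bracket_neg_right,
        bracket_isolated_right (sg_degree_eq_zero_iff.mp hv0) z, neg_zero]
    · rw [hjf]; exact bracket_edg_right f z
    · rw [hjf, bracket_neg_right, bracket_edg_right, neg_zero]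
  have key : ∀ b c, bracket G (Jc.J (basisVec G b)) (Jc.J (basisVec G c)) =
      bracket G (basisVec G b) (basisVec G c) := by
    rintro (u | e) (w | f)
    · -- vertex / vertex
      rw [basisVec_inl, basisVec_inl, bracket_vtx_vtx]
      by_cases hdu : G.degree u = 0
      · rw [lemA_left u hdu,
          bracketVtx_eq_zero_of_not_adj (sg_degree_eq_zero_iff.mp hdu w)]
      by_cases hdw : G.degree w = 0
      · rw [lemA_right w hdw,
          bracketVtx_eq_zero_of_not_adj
            (fun hadj => sg_degree_eq_zero_iff.mp hdw u hadj.symm)]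
      obtain ⟨u', hu'⟩ := G.degree_pos_iff_exists_adj u |>.mp (Nat.pos_of_ne_zero hdu)
      obtain ⟨w', hw'⟩ := G.degree_pos_iff_exists_adj w |>.mp (Nat.pos_of_ne_zero hdw)
      have hju := h3 ⟨s(u, u'), G.mem_edgeSet.mpr hu'⟩ u u' rfl
      have hjw := h3 ⟨s(w, w'), G.mem_edgeSet.mpr hw'⟩ w w' rfl
      by_cases huw : u = w
      · subst huw
        have huw' : u' = w' := sg_degree_le_one_iff.mp (h1 u) u' w' hu' hw'
        subst huw'
        rcases hju with h | h <;> rw [h] <;>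
          simp [bracket_neg_left, bracket_neg_right, bracket_vtx_vtx, bracketVtx_self]
      by_cases hadj : G.Adj u w
      · have huw' : u' = w := sg_degree_le_one_iff.mp (h1 u) u' w hu' hadj
        have hwu' : w' = u := sg_degree_le_one_iff.mp (h1 w) w' u hw' hadj.symm
        rw [huw'] at hju
        rw [hwu'] at hjw
        rcases hju with h | h <;> rcases hjw with h' | h'
        · exfalso
          have hsq := Jc.j_squared (vtx G u)
          rw [h, h'] at hsq
          exact vtx_ne_neg u u hsq
        · rw [h, h', bracket_neg_right, bracket_vtx_vtx, bracketVtx_antisymm u w, neg_neg]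
        · rw [h, h', bracket_neg_left, bracket_vtx_vtx, bracketVtx_antisymm u w, neg_neg]
        · exfalso
          have flip := Jc.j_flip_neg h
          exact vtx_ne_neg u u (flip.symm.trans h')
      · have hz : bracketVtx G u' w' = 0 := by
          by_cases hadj' : G.Adj u' w'
          · exfalso
            have huw' : w' = u := sg_degree_le_one_iff.mp (h1 u') w' u hadj' hu'.symm
            rw [huw'] at hw'
            exact hadj hw'.symm
          · exact bracketVtx_eq_zero_of_not_adj hadj'
        have hz2 : bracketVtx G u w = 0 := bracketVtx_eq_zero_of_not_adj hadj
        rcases hju with h | h <;> rcases hjw with h' | h' <;> rw [h, h'] <;>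
          simp [bracket_neg_left, bracket_neg_right, bracket_vtx_vtx, hz, hz2]
    · rw [basisVec_inl, basisVec_inr, bracket_edg_right]
      exact lemB_right f _
    · rw [basisVec_inr, bracket_edg_left]
      exact lemB_left e _
    · rw [basisVec_inr, bracket_edg_left]
      exact lemB_left e _
  exact bracket_map_congr (T := Jc.J) (S := LinearMap.id) key x y

end GraphLie

namespace GraphLie
set_option linter.unusedSectionVars false

variable {V : Type*} [Fintype V] [LinearOrder V]
variable {G : SimpleGraph V} [DecidableRel G.Adj]

lemma ab_to_dist (Jc : AdaptedCS G)
    (hab : ∀ x y : Niln G, bracket G (Jc.J x) (Jc.J y) = bracket G x y)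
    (e : G.edgeSet) : Jc.Distinguished e := by
  obtain ⟨u, w, he, hadj⟩ := edge_repr e
  have h := hab (vtx G u) (vtx G w)
  rw [bracket_vtx_vtx] at h
  rcases Jc.vtx_cases u with ⟨p, hp⟩ | ⟨e1, he1⟩
  swap
  · exfalso
    rcases he1 with h1 | h1 <;> rw [h1] at h
    · rw [bracket_edg_left] at h; exact bracketVtx_ne_zero hadj h.symm
    · rw [bracket_neg_left, bracket_edg_left, neg_zero] at h
      exact bracketVtx_ne_zero hadj h.symm
  rcases Jc.vtx_cases w with ⟨q, hq⟩ | ⟨e2, he2⟩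
  swap
  · exfalso
    rcases he2 with h1 | h1 <;> rw [h1] at h
    · rw [bracket_edg_right] at h; exact bracketVtx_ne_zero hadj h.symm
    · rw [bracket_neg_right, bracket_edg_right, neg_zero] at h
      exact bracketVtx_ne_zero hadj h.symm
  have hd : bracketVtx G p q = bracketVtx G u w ∨ bracketVtx G p q = - bracketVtx G u w := by
    rcases hp with h1 | h1 <;> rcases hq with h2 | h2
    · rw [h1, h2, bracket_vtx_vtx] at h; exact Or.inl h
    · rw [h1, h2, bracket_neg_right, bracket_vtx_vtx] at h
      exact Or.inr (neg_eq_iff_eq_neg.mp h)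
    · rw [h1, h2, bracket_neg_left, bracket_vtx_vtx] at h
      exact Or.inr (neg_eq_iff_eq_neg.mp h)
    · rw [h1, h2, bracket_neg_left, bracket_neg_right, neg_neg, bracket_vtx_vtx] at h
      exact Or.inl h
  have hpq : s(p, q) = s(u, w) := by
    by_contra hne
    rcases hd with hcase | hcase
    · have hval := congrFun hcase
        (Sum.inr (⟨s(u, w), G.mem_edgeSet.mpr hadj⟩ : G.edgeSet))
      rw [bracketVtx_apply_inr_ne p q (fun hh => hne hh.symm),
        bracketVtx_apply_inr_self u w hadj rfl] at hval
      split_ifs at hval <;> norm_num at hval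
    · have hval := congrFun hcase
        (Sum.inr (⟨s(u, w), G.mem_edgeSet.mpr hadj⟩ : G.edgeSet))
      rw [bracketVtx_apply_inr_ne p q (fun hh => hne hh.symm), Pi.neg_apply,
        bracketVtx_apply_inr_self u w hadj rfl] at hval
      split_ifs at hval <;> norm_num at hval
  rcases Sym2.eq_iff.mp hpq with ⟨hpu, hqw⟩ | ⟨hpw, hqu⟩
  · exfalso
    rw [hpu] at hp
    rcases hp with h1 | h1
    · have hsq := Jc.j_squared (vtx G u)
      rw [h1, h1] at hsq
      exact vtx_ne_neg u u hsq
    · exact vtx_ne_neg u u ((Jc.j_flip_neg h1).symm.trans h1)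
  · rw [hpw] at hp
    rcases hp with h1 | h1
    · exact ⟨u, w, he, Or.inl h1⟩
    · exact ⟨u, w, he, Or.inr (Jc.j_flip_neg h1)⟩

end GraphLie

namespace GraphLie
set_option linter.unusedSectionVars false

variable {V : Type*} [Fintype V] [LinearOrder V]
variable {G : SimpleGraph V} [DecidableRel G.Adj]

lemma two_to_dist (Jc : AdaptedCS G)
    (h3 : ∀ e : G.edgeSet, ∀ u w : V, (e : Sym2 V) = s(u, w) →
      (Jc.J (vtx G u) = vtx G w ∨ Jc.J (vtx G u) = - vtx G w))
    (e : G.edgeSet) : Jc.Distinguished e := by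
  obtain ⟨u, w, he, hadj⟩ := edge_repr e
  rcases h3 e u w he with h | h
  · exact ⟨u, w, he, Or.inl h⟩
  · exact ⟨u, w, he, Or.inr (Jc.j_flip_neg h)⟩

end GraphLie

namespace GraphLie

variable {V : Type*} [Fintype V] [LinearOrder V]

/-- For a finite simple graph `B` equipped with an adapted complex
structure `J`, the following are equivalent:
(i) every edge of `B` is distinguished;
(ii) `B` is a disjoint union of copies of `A₁`, `A₂` and `A₃`, each copy invariant under
`J` up to sign, with `J` acting on each copy as the standard adapted complex structure
(spelled out pointwise: every vertex has degree at most one; every isolated vertex is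
sent by `J`, up to sign, either to another isolated vertex (an `A₁`-copy) or to an edge
(an `A₂`-copy); the two endpoints of every edge are interchanged by `J` up to sign; and
every edge is sent by `J`, up to sign, either to an isolated vertex (an `A₂`-copy) or to
an edge disjoint from it (an `A₃`-copy));
(iii) `J` is abelian, i.e. `[Jx, Jy] = [x, y]` for all `x, y ∈ 𝔫_B`. -/
theorem statement11 (B : SimpleGraph V) [DecidableRel B.Adj] (Jc : AdaptedCS B) :
    ((∀ e : B.edgeSet, Jc.Distinguished e) ↔
      ((∀ v : V, B.degree v ≤ 1) ∧
       (∀ v : V, B.degree v = 0 →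
          (∃ w : V, w ≠ v ∧ B.degree w = 0 ∧
            (Jc.J (vtx B v) = vtx B w ∨ Jc.J (vtx B v) = - vtx B w)) ∨
          (∃ e : B.edgeSet,
            (Jc.J (vtx B v) = edg B e ∨ Jc.J (vtx B v) = - edg B e))) ∧
       (∀ e : B.edgeSet, ∀ u w : V, (e : Sym2 V) = s(u, w) →
          (Jc.J (vtx B u) = vtx B w ∨ Jc.J (vtx B u) = - vtx B w)) ∧
       (∀ e : B.edgeSet,
          (∃ v : V, B.degree v = 0 ∧
            (Jc.J (edg B e) = vtx B v ∨ Jc.J (edg B e) = - vtx B v)) ∨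
          (∃ f : B.edgeSet, (∀ x : V, x ∈ (e : Sym2 V) → x ∉ (f : Sym2 V)) ∧
            (Jc.J (edg B e) = edg B f ∨ Jc.J (edg B e) = - edg B f))))) ∧
    (((∀ v : V, B.degree v ≤ 1) ∧
       (∀ v : V, B.degree v = 0 →
          (∃ w : V, w ≠ v ∧ B.degree w = 0 ∧
            (Jc.J (vtx B v) = vtx B w ∨ Jc.J (vtx B v) = - vtx B w)) ∨
          (∃ e : B.edgeSet,
            (Jc.J (vtx B v) = edg B e ∨ Jc.J (vtx B v) = - edg B e))) ∧
       (∀ e : B.edgeSet, ∀ u w : V, (e : Sym2 V) = s(u, w) →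
          (Jc.J (vtx B u) = vtx B w ∨ Jc.J (vtx B u) = - vtx B w)) ∧
       (∀ e : B.edgeSet,
          (∃ v : V, B.degree v = 0 ∧
            (Jc.J (edg B e) = vtx B v ∨ Jc.J (edg B e) = - vtx B v)) ∨
          (∃ f : B.edgeSet, (∀ x : V, x ∈ (e : Sym2 V) → x ∉ (f : Sym2 V)) ∧
            (Jc.J (edg B e) = edg B f ∨ Jc.J (edg B e) = - edg B f)))) ↔
      (∀ x y : Niln B, bracket B (Jc.J x) (Jc.J y) = bracket B x y)) := by
  constructor
  · constructor
    · intro hdist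
      have hd1 := deg_le_one_of_dist Jc hdist
      exact ⟨hd1, iso_clause_of_dist Jc hdist, swap_clause_of_dist Jc hdist,
        edge_clause_of_dist Jc hdist hd1⟩
    · rintro ⟨h1, h2, h3, h4⟩
      exact two_to_dist Jc h3
  · constructor
    · rintro ⟨h1, h2, h3, h4⟩ x y
      exact two_to_ab Jc h1 h2 h3 h4 x y
    · intro hab
      have hdist := ab_to_dist Jc hab
      have hd1 := deg_le_one_of_dist Jc hdist
      exact ⟨hd1, iso_clause_of_dist Jc hdist, swap_clause_of_dist Jc hdist,
        edge_clause_of_dist Jc hdist hd1⟩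

end GraphLie
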